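/- For a coalitional game on K players where the value of a nonempty coalition S is the maximum of individual rewards R(c) over c ∈ S (and v(∅)=0), with players sorted so that R(c_(1)) ≥ R(c_(2)) ≥ ... ≥ R(c_(K)) ≥ 0, the Shapley value of the j-th player equals the sum over k from j to K of (R(c_(k)) − R(c_(k+1)))/k, where R(c_(K+1)) := 0. -/

import Mathlib

open Finset

/-- Shapley value of player `i` in the coalitional game `v` on the finite player set `ι`. -/
noncomputable def shapley {ι : Type*} [Fintype ι] [DecidableEq ι]
    (v : Finset ι → ℝ) (i : ι) : ℝ :=
  ∑ S ∈ (Finset.univ.erase i).powerset,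
    ((Nat.factorial S.card : ℝ) * (Nat.factorial (Fintype.card ι - S.card - 1)) /
      (Nat.factorial (Fintype.card ι))) * (v (insert i S) - v S)

/-- The max-reward game: value of a nonempty coalition is the max of individual rewards. -/
noncomputable def maxGame {ι : Type*} (R : ι → ℝ) (S : Finset ι) : ℝ :=
  if h : S.Nonempty then S.sup' h R else 0

/-! If the rewards are sorted decreasingly, the max game is the nonnegative combination
`∑ₖ (R k - R (k + 1)) • wₖ` of the simple games `wₖ` won exactly by the coalitions containing one of
the `k + 1` best players. The Shapley value is linear; in `wₖ` the players outside the top `k + 1`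
are null, and a top player is pivotal exactly for the coalitions of outsiders, whose Shapley
weights add up to `1 / (k + 1)` by the hockey-stick identity. -/

open scoped Nat

noncomputable def shapleyWeight (n s : ℕ) : ℝ := (s ! : ℝ) * (n - s - 1)! / n !

theorem shapley_eq_sum_shapleyWeight {ι : Type*} [Fintype ι] [DecidableEq ι]
    (v : Finset ι → ℝ) (i : ι) :
    shapley v i = ∑ S ∈ (univ.erase i).powerset,
      shapleyWeight (Fintype.card ι) #S * (v (insert i S) - v S) :=
  rfl

theorem shapley_sum_mul {ι α : Type*} [Fintype ι] [DecidableEq ι] (A : Finset α) (c : α → ℝ)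
    (g : α → Finset ι → ℝ) (i : ι) :
    shapley (fun S => ∑ k ∈ A, c k * g k S) i = ∑ k ∈ A, c k * shapley (g k) i := by
  simp only [shapley, ← sum_sub_distrib, ← mul_sub, mul_sum]
  rw [sum_comm]
  exact sum_congr rfl fun _ _ => sum_congr rfl fun _ _ => by ring

theorem sum_choose_mul_factorial_mul_factorial (m r : ℕ) :
    ∑ s ∈ range (m + 1), m.choose s * (s ! * (m + r - s)!) =
      m ! * r ! * (m + r + 1).choose (r + 1) := by
  have term : ∀ s ∈ range (m + 1),
      m.choose s * (s ! * (m + r - s)!) = m ! * r ! * (m - s + r).choose r := by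
    intro s hs
    have hsm : s ≤ m := Nat.lt_succ_iff.1 (mem_range.1 hs)
    apply Nat.eq_of_mul_eq_mul_right (Nat.factorial_pos (m - s))
    calc m.choose s * (s ! * (m + r - s)!) * (m - s)!
        = m.choose s * s ! * (m - s)! * (m - s + r)! := by rw [Nat.sub_add_comm hsm]; ring
      _ = m ! * ((m - s + r).choose r * (m - s)! * r !) := by
        rw [Nat.choose_mul_factorial_mul_factorial hsm, Nat.add_choose_mul_factorial_mul_factorial]
      _ = m ! * r ! * (m - s + r).choose r * (m - s)! := by ring
  rw [sum_congr rfl term, ← mul_sum, ← Nat.sum_range_add_choose,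
    ← sum_range_reflect (fun i => (i + r).choose r)]
  simp

theorem sum_choose_mul_shapleyWeight (m r : ℕ) :
    ∑ s ∈ range (m + 1), (m.choose s : ℝ) * shapleyWeight (m + r + 1) s = 1 / (r + 1) := by
  have hw : ∀ s, shapleyWeight (m + r + 1) s = (s ! * (m + r - s)! : ℕ) / (m + r + 1)! := by
    intro s
    rw [shapleyWeight, show m + r + 1 - s - 1 = m + r - s by omega]
    push_cast; rfl
  have hfac := Nat.choose_mul_factorial_mul_factorial (n := m + r + 1) (k := r + 1) (by omega)
  rw [show m + r + 1 - (r + 1) = m by omega] at hfac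
  calc ∑ s ∈ range (m + 1), (m.choose s : ℝ) * shapleyWeight (m + r + 1) s
      = ((∑ s ∈ range (m + 1), m.choose s * (s ! * (m + r - s)!) : ℕ) : ℝ) / (m + r + 1)! := by
        rw [Nat.cast_sum, sum_div]
        refine sum_congr rfl fun s _ => ?_
        rw [hw]
        push_cast
        ring
    _ = 1 / (r + 1) := by
        rw [sum_choose_mul_factorial_mul_factorial, ← hfac]
        have hchoose : ((m + r + 1).choose (r + 1) : ℝ) ≠ 0 :=
          Nat.cast_ne_zero.2 (Nat.choose_pos (by omega)).ne'
        push_cast [Nat.factorial_succ]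
        field_simp

def hittingGame {ι : Type*} [DecidableEq ι] (T S : Finset ι) : ℝ :=
  if Disjoint S T then 0 else 1

theorem shapley_hittingGame {ι : Type*} [Fintype ι] [DecidableEq ι] (T : Finset ι) (i : ι) :
    shapley (hittingGame T) i = if i ∈ T then (#T : ℝ)⁻¹ else 0 := by
  split_ifs with hi
  · have marginal : ∀ S, hittingGame T (insert i S) - hittingGame T S =
        if Disjoint S T then 1 else 0 := by
      intro S
      by_cases h : Disjoint S T <;> simp [hittingGame, disjoint_insert_left, hi, h]
    have winning : (univ.erase i).powerset.filter (fun S => Disjoint S T) = Tᶜ.powerset := by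
      ext S
      simp only [mem_filter, mem_powerset, subset_compl_iff_disjoint_right]
      refine ⟨And.right, fun hST => ⟨fun x hx => mem_erase.2 ⟨?_, mem_univ x⟩, hST⟩⟩
      rintro rfl
      exact disjoint_left.1 hST hx hi
    obtain ⟨r, hr⟩ : ∃ r, #T = r + 1 := Nat.exists_eq_succ_of_ne_zero (card_ne_zero_of_mem hi)
    have hcard : Fintype.card ι = #Tᶜ + r + 1 := by
      rw [card_compl]
      have := card_le_univ T
      omega
    rw [shapley_eq_sum_shapleyWeight]
    simp only [marginal, mul_ite, mul_one, mul_zero]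
    rw [← sum_filter, winning, sum_powerset_apply_card, hcard, hr]
    simp only [nsmul_eq_mul]
    rw [sum_choose_mul_shapleyWeight, one_div]
    push_cast
    rfl
  · rw [shapley]
    refine sum_eq_zero fun S _ => ?_
    simp [hittingGame, disjoint_insert_left, hi]

theorem maxGame_eq_of_antitone {ι : Type*} [LinearOrder ι] {R : ι → ℝ} (hR : Antitone R)
    {S : Finset ι} (hS : S.Nonempty) : maxGame R S = R (S.min' hS) := by
  rw [maxGame, dif_pos hS]
  exact le_antisymm (sup'_le _ _ fun i hi => hR (S.min'_le i hi)) (le_sup' R (S.min'_mem hS))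

theorem Fin.sum_ite_le_eq_sum_Ico {M : Type*} [AddCommMonoid M] {K : ℕ} (m : Fin K) (g : ℕ → M) :
    ∑ k : Fin K, (if m ≤ k then g k else 0) = ∑ k ∈ Ico (m : ℕ) K, g k := by
  rw [← sum_filter, ← Fin.map_valEmbedding_Ici, sum_map]
  congr 1
  ext k
  simp

def zeroExtend {K : ℕ} (R : Fin K → ℝ) (k : ℕ) : ℝ := if h : k < K then R ⟨k, h⟩ else 0

theorem maxGame_eq_sum_hittingGame {K : ℕ} {R : Fin K → ℝ} (hR : Antitone R)
    (S : Finset (Fin K)) :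
    maxGame R S = ∑ k : Fin K,
      (zeroExtend R k - zeroExtend R (k + 1)) * hittingGame (Iic k) S := by
  rcases S.eq_empty_or_nonempty with rfl | hS
  · simp [maxGame, hittingGame]
  have hit : ∀ k, hittingGame (Iic k) S = if S.min' hS ≤ k then 1 else 0 := by
    intro k
    have : Disjoint S (Iic k) ↔ ¬ S.min' hS ≤ k := by
      rw [not_le, lt_min'_iff, disjoint_left]
      simp
    rw [hittingGame, if_congr this rfl rfl, ite_not]
  simp only [hit, mul_ite, mul_one, mul_zero]
  rw [Fin.sum_ite_le_eq_sum_Ico _ fun n => zeroExtend R n - zeroExtend R (n + 1)]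
  have telescope := sum_Ico_sub (f := fun n => -zeroExtend R n) (S.min' hS).isLt.le
  simp only [neg_sub_neg] at telescope
  rw [telescope, maxGame_eq_of_antitone hR hS]
  simp [zeroExtend]

/-- Players are indexed from `0`: player `j` has rank `j + 1`. -/
theorem shapley_maxGame_closed_form_general {K : ℕ} (R : Fin K → ℝ)
    (hsort : ∀ i j : Fin K, i ≤ j → R j ≤ R i) (j : Fin K) :
    shapley (maxGame R) j =
      ∑ k ∈ Finset.Ico (j : ℕ) K,
        ((if h : k < K then R ⟨k, h⟩ else 0) - (if h : k + 1 < K then R ⟨k + 1, h⟩ else 0))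
          / (k + 1) := by
  rw [funext (maxGame_eq_sum_hittingGame hsort), shapley_sum_mul]
  simp only [shapley_hittingGame, mem_Iic, Fin.card_Iic, mul_ite, mul_zero]
  push_cast
  rw [Fin.sum_ite_le_eq_sum_Ico j
    fun k => (zeroExtend R k - zeroExtend R (k + 1)) * ((k : ℝ) + 1)⁻¹]
  simp only [div_eq_mul_inv]
  rfl

/-- Closed form for the Shapley value of the max-reward game with players sorted
in descending order of nonnegative rewards (0-based index `j` is rank `j+1`). -/
theorem shapley_maxGame_closed_form {K : ℕ} (R : Fin K → ℝ)
    (hsort : ∀ i j : Fin K, i ≤ j → R j ≤ R i) (hnn : ∀ i, 0 ≤ R i) (j : Fin K) :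
    shapley (maxGame R) j =
      ∑ k ∈ Finset.Ico (j : ℕ) K,
        ((if h : k < K then R ⟨k, h⟩ else 0) - (if h : k + 1 < K then R ⟨k + 1, h⟩ else 0))
          / (k + 1) :=
  shapley_maxGame_closed_form_general R hsort j
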